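/- arXiv:1309.7909 — 4 statements merged into one kernel-verified Lean document; each statement's English description precedes it below -/
import Mathlib

section
/- For every m ≥ 0 and j ≥ 0, the image T^m(C_{≤j}) is a closed subset of (ℝ₊^ℤ, d), where C_{≤j} is the set of sequences with at most j nonzero entries. -/
open Filter Topology

noncomputable def dZ (x y : ℤ → ℝ) : ℝ :=
  ∑' i : ℤ, min |x i - y i| 1 / 2 ^ (i.natAbs + 1)

noncomputable def Tm (ψ : ℕ → ℝ) (m : ℕ) (z : ℤ → ℝ) : ℤ → ℝ :=
  fun k => ∑ j ∈ Finset.range (m + 1), ψ j * z (k - j)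

/-- `C_{≤j}`: nonnegative double-sided sequences with at most `j`
strictly positive entries. -/
def Cle (j : ℕ) : Set (ℤ → ℝ) :=
  {x | (∀ i, 0 ≤ x i) ∧ {i : ℤ | 0 < x i}.Finite ∧ {i : ℤ | 0 < x i}.ncard ≤ j}

lemma geo_summable : Summable (fun i : ℤ => (1:ℝ) / 2 ^ (i.natAbs + 1)) := by
  have hnat : Summable (fun n : ℕ => (1:ℝ) / 2 ^ (n + 1)) := by
    have := summable_geometric_two.mul_right (1/2 : ℝ)
    refine this.congr fun n => ?_
    rw [pow_succ]
    simp only [one_div, inv_pow, mul_inv]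
  refine Summable.of_nat_of_neg ?_ ?_ <;> simpa using hnat

/-- For every `m ≥ 0` and `j ≥ 0`, the image `T^m(C_{≤j})` is closed in
`(ℝ₊^ℤ, dZ)`: any limit (in `dZ`) of a sequence from `T^m(C_{≤j})`
which is a nonnegative sequence belongs to `T^m(C_{≤j})`. -/
theorem Tm_image_Cle_closed (ψ : ℕ → ℝ) (hψ : ∀ j, 0 ≤ ψ j)
    (hψ0 : 0 < ψ 0) (m j : ℕ) :
    ∀ w : ℕ → ℤ → ℝ, (∀ n, w n ∈ Tm ψ m '' Cle j) →
    ∀ x : ℤ → ℝ, (∀ i, 0 ≤ x i) →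
    Tendsto (fun n => dZ (w n) x) atTop (𝓝 0) →
    x ∈ Tm ψ m '' Cle j := by
  intro w hw x hx hconv
  choose z hzC hzT using hw
  have hz0 : ∀ n i, 0 ≤ z n i := fun n => (hzC n).1
  -- pointwise convergence of w to x
  have hpt : ∀ k : ℤ, Tendsto (fun n => w n k) atTop (𝓝 (x k)) := by
    intro k
    have hsum : ∀ n, Summable (fun i : ℤ => min |w n i - x i| 1 / 2 ^ (i.natAbs + 1)) := by
      intro n
      refine geo_summable.of_nonneg_of_le (fun i => ?_) (fun i => ?_)
      · exact div_nonneg (le_min (abs_nonneg _) zero_le_one) (by positivity)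
      · gcongr
        exact min_le_right _ _
    have hterm : ∀ n, min |w n k - x k| 1 / 2 ^ (k.natAbs + 1) ≤ dZ (w n) x := by
      intro n
      exact (hsum n).le_tsum k fun i _ =>
        div_nonneg (le_min (abs_nonneg _) zero_le_one) (by positivity)
    have hdiv : Tendsto (fun n => min |w n k - x k| 1 / 2 ^ (k.natAbs + 1)) atTop (𝓝 0) := by
      refine squeeze_zero (fun n => ?_) hterm hconv
      exact div_nonneg (le_min (abs_nonneg _) zero_le_one) (by positivity)
    have hmin : Tendsto (fun n => min |w n k - x k| 1) atTop (𝓝 0) := by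
      have := hdiv.mul_const ((2:ℝ) ^ (k.natAbs + 1))
      rw [zero_mul] at this
      refine this.congr fun n => ?_
      field_simp
    rw [Metric.tendsto_atTop]
    intro ε hε
    have hlt : ∀ᶠ n in atTop, min |w n k - x k| 1 < min ε 1 :=
      hmin.eventually_lt_const (lt_min hε zero_lt_one)
    obtain ⟨N, hN⟩ := hlt.exists_forall_of_atTop
    refine ⟨N, fun n hn => ?_⟩
    have h1 := hN n hn
    rw [Real.dist_eq]
    have habs : |w n k - x k| < 1 := by
      by_contra hc
      push_neg at hc
      rw [min_eq_right hc] at h1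
      exact absurd h1 (not_lt.mpr (min_le_right _ _))
    rw [min_eq_left habs.le] at h1
    exact h1.trans_le (min_le_left _ _)
  -- bound for z n q
  have hbd : ∀ q : ℤ, ∃ M : ℝ, ∀ n, z n q ∈ Set.Icc (0:ℝ) M := by
    intro q
    obtain ⟨B, hB⟩ := (hpt q).bddAbove_range
    refine ⟨B / ψ 0, fun n => ⟨hz0 n q, ?_⟩⟩
    rw [le_div_iff₀ hψ0]
    have h1 : ψ 0 * z n (q - (0:ℕ)) ≤ Tm ψ m (z n) q := by
      exact Finset.single_le_sum (f := fun j' => ψ j' * z n (q - j'))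
        (fun i _ => mul_nonneg (hψ i) (hz0 n _)) (Finset.mem_range.mpr (Nat.succ_pos m))
    simp only [Nat.cast_zero, sub_zero] at h1
    have h2 : w n q ≤ B := hB ⟨n, rfl⟩
    rw [hzT n] at h1
    linarith [mul_comm (ψ 0) (z n q)]
  choose M hM using hbd
  -- ultrafilter
  set U : Ultrafilter ℕ := Filter.hyperfilter ℕ with hU
  have hUle : (U : Filter ℕ) ≤ atTop := Nat.hyperfilter_le_atTop
  have hlim : ∀ q : ℤ, ∃ a : ℝ, 0 ≤ a ∧ Tendsto (fun n => z n q) ↑U (𝓝 a) := by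
    intro q
    have hcomp : IsCompact (Set.Icc (0:ℝ) (M q)) := isCompact_Icc
    have hmem : ↑(U.map (fun n => z n q)) ≤ Filter.principal (Set.Icc (0:ℝ) (M q)) := by
      rw [Ultrafilter.coe_map, Filter.le_principal_iff, Filter.mem_map]
      exact Filter.Eventually.of_forall fun n => hM q n
    obtain ⟨a, ha, hta⟩ := hcomp.ultrafilter_le_nhds (U.map fun n => z n q) hmem
    exact ⟨a, ha.1, hta⟩
  choose y hy0 hyt using hlim
  -- the finset card bound
  have hScard : ∀ S : Finset ℤ, ↑S ⊆ {q : ℤ | 0 < y q} → S.card ≤ j := by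
    intro S hS
    have hev : ∀ᶠ n in (U : Filter ℕ), ∀ q ∈ S, 0 < z n q := by
      rw [eventually_all_finset]
      intro q hq
      exact (hyt q).eventually (eventually_gt_nhds (hS hq))
    obtain ⟨n, hn⟩ := hev.exists
    have hsub : ↑S ⊆ {q : ℤ | 0 < z n q} := fun q hq => hn q hq
    calc S.card = (↑S : Set ℤ).ncard := (Set.ncard_coe_finset S).symm
      _ ≤ {q : ℤ | 0 < z n q}.ncard := Set.ncard_le_ncard hsub (hzC n).2.1
      _ ≤ j := (hzC n).2.2
  have hfin : {q : ℤ | 0 < y q}.Finite := by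
    by_contra hinf
    obtain ⟨S, hSsub, hScard'⟩ := Set.Infinite.exists_subset_card_eq hinf (j + 1)
    have := hScard S hSsub
    omega
  have hcard : {q : ℤ | 0 < y q}.ncard ≤ j := by
    rw [Set.ncard_eq_toFinset_card _ hfin]
    exact hScard hfin.toFinset (by simp)
  refine ⟨y, ⟨hy0, hfin, hcard⟩, ?_⟩
  funext k
  have h1 : Tendsto (fun n => Tm ψ m (z n) k) ↑U (𝓝 (Tm ψ m y k)) := by
    unfold Tm
    exact tendsto_finset_sum _ fun j' _ => ((hyt (k - j')).const_mul (ψ j'))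
  have h2 : Tendsto (fun n => w n k) ↑U (𝓝 (x k)) := (hpt k).mono_left hUle
  have h3 : (fun n => Tm ψ m (z n) k) = fun n => w n k := by
    funext n; rw [hzT n]
  rw [h3] at h1
  exact tendsto_nhds_unique h1 h2
end

section
/- Suppose h : S → S' is uniformly continuous between complete separable metric spaces, C ⊂ S is closed, C' = h(C) is closed in S'. If Borel measures μ_n → μ in M(S∖C) (i.e. ∫f dμ_n → ∫f dμ for all bounded continuous f ≥ 0 vanishing on a neighborhood of C), then μ_n ∘ h^{-1} → μ ∘ h^{-1} in M(S'∖C'). -/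
open Filter Topology MeasureTheory

/-- Membership in `M(S∖C)`: a Borel measure giving no mass to `C` and
finite mass to the complement of every `r`-neighborhood of `C`. -/
def MOMem {S : Type*} [MetricSpace S] [MeasurableSpace S]
    (C : Set S) (μ : Measure S) : Prop :=
  μ C = 0 ∧ ∀ r > (0 : ℝ), μ {x | r ≤ Metric.infDist x C} ≠ ⊤

/-- Convergence in `M(S∖C)`: integrals converge for every bounded,
continuous, nonnegative function whose support is bounded away from `C`
(i.e. vanishing on an `r`-neighborhood of `C` for some `r > 0`). -/
def MOConv {S : Type*} [MetricSpace S] [MeasurableSpace S]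
    (C : Set S) (μs : ℕ → Measure S) (μ : Measure S) : Prop :=
  ∀ f : S → ℝ, Continuous f → (∀ x, 0 ≤ f x) → (∃ B, ∀ x, f x ≤ B) →
    (∃ r > (0 : ℝ), ∀ x, Metric.infDist x C < r → f x = 0) →
    Tendsto (fun n => ∫ x, f x ∂(μs n)) atTop (𝓝 (∫ x, f x ∂μ))

/-- Mapping theorem: if `h` is uniformly continuous, `C` is closed and
`C' = h(C)` is closed, then `μ_n → μ` in `M(S∖C)` implies
`μ_n ∘ h⁻¹ → μ ∘ h⁻¹` in `M(S'∖C')`. -/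
theorem MO_mapping_theorem
    {S : Type*} [MetricSpace S] [CompleteSpace S] [SecondCountableTopology S]
    [MeasurableSpace S] [BorelSpace S]
    {S' : Type*} [MetricSpace S'] [CompleteSpace S'] [SecondCountableTopology S']
    [MeasurableSpace S'] [BorelSpace S']
    (h : S → S') (hh : UniformContinuous h)
    (C : Set S) (hC : IsClosed C) (hC' : IsClosed (h '' C))
    (μs : ℕ → Measure S) (μ : Measure S)
    (hmem : ∀ n, MOMem C (μs n)) (hmemμ : MOMem C μ)
    (hconv : MOConv C μs μ) :
    MOConv (h '' C) (fun n => (μs n).map h) (μ.map h) := by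
  intro f hf hf0 hfB hfr
  obtain ⟨r, hr, hfr⟩ := hfr
  obtain ⟨δ, hδ, hδr⟩ := Metric.uniformContinuous_iff.mp hh r hr
  have key : ∀ ν : Measure S, ∫ x, f x ∂(ν.map h) = ∫ x, f (h x) ∂ν := fun ν =>
    integral_map hh.continuous.measurable.aemeasurable hf.aestronglyMeasurable
  simp only [key]
  apply hconv (fun x => f (h x)) (hf.comp hh.continuous) (fun x => hf0 (h x))
    ⟨hfB.choose, fun x => hfB.choose_spec (h x)⟩
  refine ⟨δ, hδ, fun x hx => ?_⟩
  by_cases hCe : C.Nonempty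
  · obtain ⟨c, hc, hdc⟩ := (Metric.infDist_lt_iff hCe).mp hx
    exact hfr (h x) (lt_of_le_of_lt
      (Metric.infDist_le_dist_of_mem (Set.mem_image_of_mem h hc)) (hδr hdc))
  · have : h '' C = ∅ := by
      rw [Set.not_nonempty_iff_eq_empty] at hCe; simp [hCe]
    exact hfr (h x) (by rw [this, Metric.infDist_empty]; exact hr)
end

section
/- Let μ, μ_n ∈ M(S∖C). Then μ_n → μ in M(S∖C) if and only if ∫f dμ_n → ∫f dμ for every nonnegative bounded f that is uniformly continuous on S and vanishes on C^r for some r > 0. -/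
open Filter Topology MeasureTheory

section approx
variable {S : Type*} [MetricSpace S]

/-- lower Lipschitz approximation (inf-convolution) -/
noncomputable def approxL (f : S → ℝ) (k : ℕ) (x : S) : ℝ :=
  ⨅ y, f y + k * dist x y

/-- upper Lipschitz approximation (sup-convolution) -/
noncomputable def approxU (f : S → ℝ) (k : ℕ) (x : S) : ℝ :=
  -approxL (fun y => -f y) k x

variable {f : S → ℝ} {c B : ℝ}

lemma approxL_bddBelow (hc : ∀ y, c ≤ f y) (k : ℕ) (x : S) :
    BddBelow (Set.range fun y => f y + k * dist x y) := by
  refine ⟨c, fun z hz => ?_⟩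
  obtain ⟨y, rfl⟩ := hz
  have h0 : (0:ℝ) ≤ k * dist x y := by positivity
  have := hc y
  dsimp only
  linarith

lemma le_approxL (hc : ∀ y, c ≤ f y) (k : ℕ) (x : S) : c ≤ approxL f k x := by
  haveI : Nonempty S := ⟨x⟩
  refine le_ciInf fun y => ?_
  have h0 : (0:ℝ) ≤ k * dist x y := by positivity
  linarith [hc y]

lemma approxL_le (hc : ∀ y, c ≤ f y) (k : ℕ) (x : S) : approxL f k x ≤ f x := by
  simpa [approxL] using ciInf_le (approxL_bddBelow hc k x) x

lemma approxL_lipschitz (hc : ∀ y, c ≤ f y) (k : ℕ) :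
    LipschitzWith k (approxL f k) := by
  refine LipschitzWith.of_le_add_mul _ fun x x' => ?_
  haveI : Nonempty S := ⟨x⟩
  have key : approxL f k x - k * dist x x' ≤ approxL f k x' := by
    refine le_ciInf fun y => ?_
    have h1 : approxL f k x ≤ f y + k * dist x y := ciInf_le (approxL_bddBelow hc k x) y
    have h2 : dist x y ≤ dist x x' + dist x' y := dist_triangle x x' y
    have h3 : (k:ℝ) * dist x y ≤ k * dist x x' + k * dist x' y := by
      nlinarith [Nat.cast_nonneg (α := ℝ) k]
    linarith
  simp only [NNReal.coe_natCast]
  linarith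

lemma approxL_tendsto (hc : ∀ y, c ≤ f y) (hf : Continuous f) (x : S) :
    Tendsto (fun k => approxL f k x) atTop (𝓝 (f x)) := by
  haveI : Nonempty S := ⟨x⟩
  rw [Metric.tendsto_atTop]
  intro ε hε
  obtain ⟨δ, hδ, hδ'⟩ := Metric.continuous_iff.1 hf x (ε/2) (by linarith)
  obtain ⟨K, hK⟩ := exists_nat_ge ((f x - c) / δ)
  refine ⟨K, fun k hk => ?_⟩
  have h1 : approxL f k x ≤ f x := approxL_le hc k x
  have h2 : f x - ε/2 ≤ approxL f k x := by
    refine le_ciInf fun y => ?_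
    rcases lt_or_ge (dist y x) δ with h | h
    · have hd := abs_sub_lt_iff.1 (hδ' y h)
      have h0 : (0:ℝ) ≤ k * dist x y := by positivity
      linarith [hd.2]
    · have hKk : ((f x - c) / δ) ≤ k := le_trans hK (by exact_mod_cast hk)
      have hb : f x - c ≤ k * δ := by
        rw [div_le_iff₀ hδ] at hKk; linarith
      have hdy : (k:ℝ) * δ ≤ k * dist x y := by
        rw [dist_comm]
        exact mul_le_mul_of_nonneg_left h (Nat.cast_nonneg k)
      linarith [hc y]
  rw [Real.dist_eq, abs_sub_lt_iff]
  constructor <;> linarith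

lemma le_approxU (hB : ∀ y, f y ≤ B) (k : ℕ) (x : S) : f x ≤ approxU f k x := by
  have := approxL_le (f := fun y => -f y) (c := -B) (fun y => by simpa using hB y) k x
  simp only [approxU]
  linarith

lemma approxU_le (hB : ∀ y, f y ≤ B) (k : ℕ) (x : S) : approxU f k x ≤ B := by
  have := le_approxL (f := fun y => -f y) (c := -B) (fun y => by simpa using hB y) k x
  simp only [approxU]
  linarith

lemma approxU_lipschitz (hB : ∀ y, f y ≤ B) (k : ℕ) :
    LipschitzWith k (approxU f k) :=
  (approxL_lipschitz (f := fun y => -f y) (c := -B)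
    (fun y => by simpa using hB y) k).neg

lemma approxU_tendsto (hB : ∀ y, f y ≤ B) (hf : Continuous f) (x : S) :
    Tendsto (fun k => approxU f k x) atTop (𝓝 (f x)) := by
  have := (approxL_tendsto (f := fun y => -f y) (c := -B)
    (fun y => by simpa using hB y) hf.neg x).neg
  simpa [approxU] using this

lemma approxU_vanish {C : Set S} {r : ℝ} (hf0 : ∀ y, 0 ≤ f y) (hB : ∀ y, f y ≤ B)
    (hvan : ∀ y, Metric.infDist y C < r → f y = 0) (hr : 0 < r)
    {k : ℕ} (hk : B ≤ k * (r/2)) {x : S} (hx : Metric.infDist x C < r/2) :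
    approxU f k x = 0 := by
  haveI : Nonempty S := ⟨x⟩
  refine le_antisymm ?_ ?_
  · rw [approxU, neg_nonpos]
    refine le_ciInf fun y => ?_
    rcases lt_or_ge (Metric.infDist y C) r with h | h
    · have : f y = 0 := hvan y h
      dsimp only
      have h0 : (0:ℝ) ≤ k * dist x y := by positivity
      linarith
    · have h1 : Metric.infDist y C ≤ Metric.infDist x C + dist y x :=
        Metric.infDist_le_infDist_add_dist
      have h2 : r/2 ≤ dist x y := by
        rw [dist_comm]; linarith
      have h3 : (k:ℝ) * (r/2) ≤ k * dist x y :=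
        mul_le_mul_of_nonneg_left h2 (Nat.cast_nonneg k)
      have := hB y
      dsimp only
      linarith
  · have hfx : f x = 0 := hvan x (by linarith)
    have := le_approxU hB k x
    linarith

end approx

section integral
variable {S : Type*} [MetricSpace S] [MeasurableSpace S] [BorelSpace S]
  {C : Set S}

lemma integrable_aux (μ : Measure S) {g : S → ℝ} (hg : Continuous g) {B : ℝ}
    (hB : ∀ x, |g x| ≤ B) {r : ℝ} (hr : 0 < r)
    (hsupp : ∀ x, Metric.infDist x C < r → g x = 0)
    (hμ : μ {x | r ≤ Metric.infDist x C} ≠ ⊤) : Integrable g μ := by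
  set A : Set S := {x | r ≤ Metric.infDist x C} with hA
  have hAmeas : MeasurableSet A :=
    (isClosed_le continuous_const (Metric.continuous_infDist_pt C)).measurableSet
  have heq : g = A.indicator g := by
    funext x
    by_cases hx : x ∈ A
    · rw [Set.indicator_of_mem hx]
    · rw [Set.indicator_of_notMem hx]
      exact hsupp x (lt_of_not_ge hx)
  rw [heq, integrable_indicator_iff hAmeas]
  have hconst : IntegrableOn (fun _ => B) A μ :=
    integrableOn_const hμ
  exact Integrable.mono' hconst hg.aestronglyMeasurable
    (Filter.Eventually.of_forall fun x => by
      rw [Real.norm_eq_abs]; exact hB x)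

lemma tendsto_integral_aux (μ : Measure S) {F : ℕ → S → ℝ} {g : S → ℝ}
    (hF : ∀ k, Continuous (F k)) {B : ℝ}
    (hbnd : ∀ k x, |F k x| ≤ B) {r : ℝ} (hr : 0 < r)
    (hsupp : ∀ k x, Metric.infDist x C < r → F k x = 0)
    (hμ : μ {x | r ≤ Metric.infDist x C} ≠ ⊤)
    (hptw : ∀ x, Tendsto (fun k => F k x) atTop (𝓝 (g x))) :
    Tendsto (fun k => ∫ x, F k x ∂μ) atTop (𝓝 (∫ x, g x ∂μ)) := by
  set A : Set S := {x | r ≤ Metric.infDist x C} with hA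
  have hAmeas : MeasurableSet A :=
    (isClosed_le continuous_const (Metric.continuous_infDist_pt C)).measurableSet
  have hbound : Integrable (A.indicator fun _ => B) μ := by
    rw [integrable_indicator_iff hAmeas]
    exact integrableOn_const hμ
  refine tendsto_integral_of_dominated_convergence _ (fun k => (hF k).aestronglyMeasurable)
    hbound (fun k => Filter.Eventually.of_forall fun x => ?_)
    (Filter.Eventually.of_forall hptw)
  by_cases hx : x ∈ A
  · rw [Set.indicator_of_mem hx, Real.norm_eq_abs]
    exact hbnd k x
  · rw [Set.indicator_of_notMem hx, hsupp k x (lt_of_not_ge hx), norm_zero]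

end integral

/-- Portmanteau (i) ⇔ (ii): convergence in `M(S∖C)` is equivalent to
convergence of integrals of nonnegative, bounded, *uniformly* continuous
functions vanishing on a neighborhood `C^r` of `C`. -/
theorem MO_portmanteau_uniformly_continuous
    {S : Type*} [MetricSpace S] [CompleteSpace S] [SecondCountableTopology S]
    [MeasurableSpace S] [BorelSpace S]
    (C : Set S) (hC : IsClosed C)
    (μs : ℕ → Measure S) (μ : Measure S)
    (hmem : ∀ n, MOMem C (μs n)) (hmemμ : MOMem C μ) :
    MOConv C μs μ ↔
    (∀ f : S → ℝ, UniformContinuous f → (∀ x, 0 ≤ f x) → (∃ B, ∀ x, f x ≤ B) →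
      (∃ r > (0 : ℝ), ∀ x, Metric.infDist x C < r → f x = 0) →
      Tendsto (fun n => ∫ x, f x ∂(μs n)) atTop (𝓝 (∫ x, f x ∂μ))) := by
  constructor
  · intro h f hf hf0 hfB hfv
    exact h f hf.continuous hf0 hfB hfv
  · intro h f hf hf0 hfB hfv
    obtain ⟨B, hB⟩ := hfB
    obtain ⟨r, hr, hvan⟩ := hfv
    set B' := max B 0 with hB'def
    have hB'nn : (0:ℝ) ≤ B' := le_max_right _ _
    have hfB' : ∀ x, f x ≤ B' := fun x => (hB x).trans (le_max_left _ _)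
    have habs : ∀ x, |f x| ≤ B' := fun x => abs_le.2 ⟨by linarith [hf0 x], hfB' x⟩
    obtain ⟨K₀, hK₀⟩ := exists_nat_ge (B' / (r/2))
    have hr2 : (0:ℝ) < r/2 := by linarith
    have hkK : ∀ k : ℕ, B' ≤ (k + K₀ : ℕ) * (r/2) := by
      intro k
      have h1 : (K₀:ℝ) ≤ (k + K₀ : ℕ) := by exact_mod_cast Nat.le_add_left K₀ k
      have := (div_le_iff₀ hr2).1 hK₀
      nlinarith
    -- tendsto for approxL
    have tendsto_F : ∀ k, Tendsto (fun n => ∫ x, approxL f k x ∂(μs n)) atTop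
        (𝓝 (∫ x, approxL f k x ∂μ)) := by
      intro k
      refine h _ ((approxL_lipschitz hf0 k).uniformContinuous) (le_approxL hf0 k)
        ⟨B', fun x => (approxL_le hf0 k x).trans (hfB' x)⟩
        ⟨r, hr, fun x hx => le_antisymm ((approxL_le hf0 k x).trans_eq (hvan x hx))
          (le_approxL hf0 k x)⟩
    -- tendsto for approxU
    have tendsto_G : ∀ k, Tendsto (fun n => ∫ x, approxU f (k + K₀) x ∂(μs n)) atTop
        (𝓝 (∫ x, approxU f (k + K₀) x ∂μ)) := by
      intro k
      refine h _ ((approxU_lipschitz hfB' (k + K₀)).uniformContinuous)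
        (fun x => (hf0 x).trans (le_approxU hfB' _ x))
        ⟨B', approxU_le hfB' _⟩
        ⟨r/2, hr2, fun x hx => approxU_vanish hf0 hfB' hvan hr (hkK k) hx⟩
    -- integrability
    have hint : ∀ ν : Measure S, MOMem C ν → Integrable f ν := fun ν hν =>
      integrable_aux ν hf habs hr hvan (hν.2 r hr)
    have habsU : ∀ (k : ℕ) x, |approxU f k x| ≤ B' := fun k x =>
      abs_le.2 ⟨by linarith [(hf0 x).trans (le_approxU hfB' k x)], approxU_le hfB' k x⟩
    have habsL : ∀ (k : ℕ) x, |approxL f k x| ≤ B' := fun k x =>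
      abs_le.2 ⟨by linarith [le_approxL hf0 k x], (approxL_le hf0 k x).trans (hfB' x)⟩
    have hintG : ∀ (ν : Measure S), MOMem C ν → ∀ k, Integrable (approxU f (k + K₀)) ν :=
      fun ν hν k =>
      integrable_aux ν (approxU_lipschitz hfB' (k + K₀)).continuous (habsU _) hr2
        (fun x hx => approxU_vanish hf0 hfB' hvan hr (hkK k) hx) (hν.2 (r/2) hr2)
    have hintF : ∀ (ν : Measure S), MOMem C ν → ∀ k, Integrable (approxL f k) ν :=
      fun ν hν k =>
      integrable_aux ν (approxL_lipschitz hf0 k).continuous (habsL _) hr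
        (fun x hx => le_antisymm ((approxL_le hf0 k x).trans_eq (hvan x hx))
          (le_approxL hf0 k x)) (hν.2 r hr)
    have hle : ∀ n k, ∫ x, f x ∂(μs n) ≤ ∫ x, approxU f (k + K₀) x ∂(μs n) := fun n k =>
      integral_mono (hint _ (hmem n)) (hintG _ (hmem n) k) (fun x => le_approxU hfB' _ x)
    have hge : ∀ n k, ∫ x, approxL f k x ∂(μs n) ≤ ∫ x, f x ∂(μs n) := fun n k =>
      integral_mono (hintF _ (hmem n) k) (hint _ (hmem n)) (fun x => approxL_le hf0 k x)
    have hpos : ∀ n, (0:ℝ) ≤ ∫ x, f x ∂(μs n) := fun n => integral_nonneg hf0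
    -- k-limits of integrals w.r.t. μ
    have hGlim : Tendsto (fun k => ∫ x, approxU f (k + K₀) x ∂μ) atTop
        (𝓝 (∫ x, f x ∂μ)) :=
      tendsto_integral_aux μ (fun k => (approxU_lipschitz hfB' (k + K₀)).continuous)
        (fun k => habsU (k + K₀)) hr2
        (fun k x hx => approxU_vanish hf0 hfB' hvan hr (hkK k) hx) (hmemμ.2 (r/2) hr2)
        (fun x => (approxU_tendsto hfB' hf x).comp (tendsto_add_atTop_nat K₀))
    have hFlim : Tendsto (fun k => ∫ x, approxL f k x ∂μ) atTop (𝓝 (∫ x, f x ∂μ)) :=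
      tendsto_integral_aux μ (fun k => (approxL_lipschitz hf0 k).continuous)
        habsL hr
        (fun k x hx => le_antisymm ((approxL_le hf0 k x).trans_eq (hvan x hx))
          (le_approxL hf0 k x)) (hmemμ.2 r hr)
        (approxL_tendsto hf0 hf)
    set I : ℕ → ℝ := fun n => ∫ x, f x ∂(μs n) with hI
    have hbdd_below : IsBoundedUnder (· ≥ ·) atTop I := isBoundedUnder_of ⟨0, fun n => hpos n⟩
    have hbdd_above : IsBoundedUnder (· ≤ ·) atTop I := by
      obtain ⟨b, hb⟩ := (tendsto_G 0).isBoundedUnder_le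
      refine ⟨b, ?_⟩
      rw [eventually_map] at hb ⊢
      exact hb.mono fun n hn => (hle n 0).trans hn
    have hliminf : ∫ x, f x ∂μ ≤ atTop.liminf I := by
      refine le_of_tendsto hFlim (Eventually.of_forall fun k => ?_)
      calc ∫ x, approxL f k x ∂μ
          = atTop.liminf (fun n => ∫ x, approxL f k x ∂(μs n)) := (tendsto_F k).liminf_eq.symm
        _ ≤ atTop.liminf I :=
            liminf_le_liminf (Eventually.of_forall fun n => hge n k)
              (isBoundedUnder_of ⟨0, fun n => integral_nonneg (le_approxL hf0 k)⟩)
              hbdd_above.isCoboundedUnder_ge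
    have hlimsup : atTop.limsup I ≤ ∫ x, f x ∂μ := by
      refine ge_of_tendsto hGlim (Eventually.of_forall fun k => ?_)
      calc atTop.limsup I
          ≤ atTop.limsup (fun n => ∫ x, approxU f (k + K₀) x ∂(μs n)) :=
            limsup_le_limsup (Eventually.of_forall fun n => hle n k)
              (hbdd_below.isCoboundedUnder_le) (tendsto_G k).isBoundedUnder_le
        _ = ∫ x, approxU f (k + K₀) x ∂μ := (tendsto_G k).limsup_eq
    exact tendsto_of_le_liminf_of_limsup_le hliminf hlimsup hbdd_above hbdd_below
end

section
/- Let μ, μ_n ∈ M(S∖C). Then μ_n → μ in M(S∖C) if and only if the restrictions μ_n^{(r)} → μ^{(r)} weakly as finite measures on S∖C^r for every r > 0 with μ(∂(S∖C^r)) = 0. -/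
open Filter Topology MeasureTheory

open Set

set_option linter.unusedSectionVars false
set_option linter.unusedVariables false

section Helpers

variable {S : Type*} [MetricSpace S] [MeasurableSpace S] [BorelSpace S]

lemma contD (C : Set S) : Continuous fun x : S => Metric.infDist x C :=
  Metric.continuous_infDist_pt C

lemma closedA (C : Set S) (r : ℝ) : IsClosed {x : S | r ≤ Metric.infDist x C} :=
  isClosed_le continuous_const (contD C)

lemma measA (C : Set S) (r : ℝ) : MeasurableSet {x : S | r ≤ Metric.infDist x C} :=
  (closedA C r).measurableSet

lemma frontierA_subset (C : Set S) (r : ℝ) :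
    frontier {x : S | r ≤ Metric.infDist x C} ⊆ {x | Metric.infDist x C = r} := by
  have := frontier_le_subset_eq (f := fun _ : S => r) (g := fun x => Metric.infDist x C)
    continuous_const (contD C)
  intro x hx
  exact (this hx).symm

lemma integrableOn_of_bdd {m : Measure S} {A : Set S} (hA : m A ≠ ⊤)
    {f : S → ℝ} (hf : Continuous f) {B : ℝ}
    (hB : ∀ x, |f x| ≤ B) : IntegrableOn f A m := by
  have : IsFiniteMeasure (m.restrict A) :=
    ⟨by rw [Measure.restrict_apply_univ]; exact lt_top_iff_ne_top.2 hA⟩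
  exact ⟨hf.aestronglyMeasurable, HasFiniteIntegral.of_bounded (C := B)
    (Eventually.of_forall fun x => by simpa [Real.norm_eq_abs] using hB x)⟩

lemma forward_key [SecondCountableTopology S]
    {C : Set S} {μs : ℕ → Measure S} {μ : Measure S}
    (hconv : MOConv C μs μ)
    (hmem : ∀ n, MOMem C (μs n)) (hmemμ : MOMem C μ)
    {r : ℝ} (hr : 0 < r)
    (hfront : μ (frontier {x | r ≤ Metric.infDist x C}) = 0)
    {f : S → ℝ} (hf : Continuous f) {B : ℝ} (hB0 : 0 ≤ B)
    (hf0 : ∀ x, 0 ≤ f x) (hfB : ∀ x, f x ≤ B) :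
    Tendsto (fun n => ∫ x in {x | r ≤ Metric.infDist x C}, f x ∂(μs n))
      atTop (𝓝 (∫ x in {x | r ≤ Metric.infDist x C}, f x ∂μ)) := by
  set d : S → ℝ := fun x => Metric.infDist x C with hd
  set A : ℝ → Set S := fun t => {x : S | t ≤ d x} with hA
  rw [Metric.tendsto_atTop]
  intro δ hδ
  set δ' : ℝ := δ / (2 * B + 3) with hδ'def
  have h2B3 : (0:ℝ) < 2 * B + 3 := by linarith
  have hδ' : 0 < δ' := div_pos hδ h2B3
  -- Step 1: find ε = 1/(k+1) with small measure of the collar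
  set sq : ℕ → Set S := fun k => {x | r - 1 / (k + 1) ≤ d x} ∩ closure {x | d x < r} with hsq
  have sq_meas : ∀ k, NullMeasurableSet (sq k) μ := fun k =>
    (((isClosed_le continuous_const (contD C)).inter isClosed_closure).measurableSet).nullMeasurableSet
  have sq_anti : Antitone sq := by
    intro k l hkl x hx
    have h1 : (1 : ℝ) / (l + 1) ≤ 1 / (k + 1) := by
      apply one_div_le_one_div_of_le <;> [positivity; exact_mod_cast Nat.succ_le_succ hkl]
    have hx1 : r - 1 / ((l:ℝ) + 1) ≤ d x := hx.1
    exact ⟨show r - 1 / ((k:ℝ) + 1) ≤ d x by linarith, hx.2⟩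
  have sq_fin : ∃ k, μ (sq k) ≠ ⊤ := by
    obtain ⟨k, hk⟩ := exists_nat_one_div_lt (half_pos hr)
    refine ⟨k, ne_top_of_le_ne_top (hmemμ.2 (r/2) (half_pos hr)) (measure_mono ?_)⟩
    intro x hx
    have hx1 : r - 1 / ((k:ℝ) + 1) ≤ d x := hx.1
    show r / 2 ≤ d x
    linarith
  have sq_inter : ⋂ k, sq k = frontier (A r) := by
    rw [frontier_eq_closure_inter_closure, (closedA C r).closure_eq]
    have hcompl : (A r)ᶜ = {x : S | d x < r} := by
      ext x; simp [hA, not_le]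
    rw [hcompl]
    ext x
    simp only [mem_iInter, hsq, mem_inter_iff, mem_setOf_eq]
    constructor
    · rintro h
      refine ⟨?_, (h 0).2⟩
      by_contra hlt
      push_neg at hlt
      obtain ⟨k, hk⟩ := exists_nat_one_div_lt (sub_pos.2 hlt)
      have h2 : r - 1 / ((k:ℝ) + 1) ≤ d x := (h k).1
      linarith
    · rintro ⟨h1, h2⟩ k
      have h3 : (0:ℝ) < 1 / ((k:ℝ)+1) := by positivity
      exact ⟨show r - 1 / ((k:ℝ) + 1) ≤ d x by linarith, h2⟩
  have sq_tendsto : Tendsto (fun k => μ (sq k)) atTop (𝓝 0) := by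
    have := tendsto_measure_iInter_atTop sq_meas sq_anti sq_fin
    rwa [sq_inter, hfront] at this
  have ev1 : ∀ᶠ k in atTop, μ (sq k) < ENNReal.ofReal δ' :=
    sq_tendsto.eventually_lt_const (by simp [hδ'])
  have ev2 : ∀ᶠ k : ℕ in atTop, 1 / ((k : ℝ) + 1) < r / 2 := by
    have := tendsto_one_div_add_atTop_nhds_zero_nat (𝕜 := ℝ)
    exact this.eventually_lt_const (half_pos hr)
  obtain ⟨k, hk1, hk2⟩ := (ev1.and ev2).exists
  set ε : ℝ := 1 / ((k : ℝ) + 1) with hεdef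
  have hε : 0 < ε := by positivity
  have hεr : ε < r / 2 := hk2
  set K : Set S := sq k with hK
  have hKclosed : IsClosed K :=
    (isClosed_le continuous_const (contD C)).inter isClosed_closure
  have hKμ : μ K < ENNReal.ofReal δ' := hk1
  -- Step 2: open set U ⊇ K, away from C, with small μ-measure
  set W : Set S := {x : S | r / 2 < d x} with hW
  have hWopen : IsOpen W := isOpen_lt continuous_const (contD C)
  have hWA : W ⊆ A (r/2) := fun x hx => show r/2 ≤ d x from le_of_lt hx
  have hWfin : μ W ≠ ⊤ := ne_top_of_le_ne_top (hmemμ.2 (r/2) (half_pos hr)) (measure_mono hWA)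
  have hKW : K ⊆ W := by
    intro x hx
    have hx1 : r - ε ≤ d x := hx.1
    show r / 2 < d x
    linarith
  set ν : Measure S := μ.restrict W with hν
  haveI : IsFiniteMeasure ν :=
    ⟨by rw [hν, Measure.restrict_apply_univ]; exact lt_top_iff_ne_top.2 hWfin⟩
  have hνK : ν K < ENNReal.ofReal δ' :=
    lt_of_le_of_lt (Measure.restrict_apply_le W K) hKμ
  obtain ⟨U₀, hKU₀, hU₀open, hU₀ν⟩ := Set.exists_isOpen_lt_of_lt K (ENNReal.ofReal δ') hνK
  set U : Set S := U₀ ∩ W with hU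
  have hUopen : IsOpen U := hU₀open.inter hWopen
  have hKU : K ⊆ U := fun x hx => ⟨hKU₀ hx, hKW hx⟩
  have hUμ : μ U < ENNReal.ofReal δ' := by
    have : μ U = ν U₀ := by
      rw [hν, Measure.restrict_apply hU₀open.measurableSet]
    rw [this]; exact hU₀ν
  have hUW : U ⊆ W := inter_subset_right
  -- Step 3: Urysohn function
  obtain ⟨h, hU0, hU1, h01⟩ := exists_continuous_zero_one_of_isClosed
    (isClosed_compl_iff.2 hUopen) hKclosed (disjoint_left.2 fun x hxc hxK => hxc (hKU hxK))
  set ψ : S → ℝ := fun x => B * h x with hψdef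
  have hψcont : Continuous ψ := continuous_const.mul h.continuous
  have hψ0 : ∀ x, 0 ≤ ψ x := fun x => mul_nonneg hB0 (h01 x).1
  have hψB : ∀ x, ψ x ≤ B := fun x => by
    have := (h01 x).2
    calc B * h x ≤ B * 1 := by nlinarith
    _ = B := mul_one B
  have hψvan : ∀ x, d x < r / 2 → ψ x = 0 := by
    intro x hx
    have hxU : x ∈ Uᶜ := fun hxU => absurd (hUW hxU) (by simp [hW]; linarith)
    simp [hψdef, hU0 hxU]
  have hψtend : Tendsto (fun n => ∫ x, ψ x ∂(μs n)) atTop (𝓝 (∫ x, ψ x ∂μ)) :=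
    hconv ψ hψcont hψ0 ⟨B, hψB⟩ ⟨r/2, half_pos hr, hψvan⟩
  -- ψ vanishes off U
  have hψvanU : ∀ x, x ∉ U → ψ x = 0 := fun x hx => by simp [hψdef, hU0 hx]
  -- ∫ ψ dμ ≤ B * δ'
  have hψμ_le : ∫ x, ψ x ∂μ ≤ B * δ' := by
    rw [← setIntegral_eq_integral_of_forall_compl_eq_zero hψvanU]
    have hb := norm_setIntegral_le_of_norm_le_const (μ := μ) (s := U) (f := ψ) (C := B)
      (lt_trans hUμ ENNReal.ofReal_lt_top)
      (fun x _ => by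
        rw [Real.norm_eq_abs, abs_of_nonneg (hψ0 x)]; exact hψB x)
    have htr : (μ U).toReal ≤ δ' := ENNReal.toReal_le_of_le_ofReal hδ'.le hUμ.le
    calc ∫ x in U, ψ x ∂μ ≤ ‖∫ x in U, ψ x ∂μ‖ := le_abs_self _
    _ ≤ B * (μ U).toReal := hb
    _ ≤ B * δ' := by nlinarith
  -- Step 4: cutoff g and test function φ
  set g : S → ℝ := fun x => max 0 (min 1 ((d x - (r - ε)) / ε)) with hgdef
  have hgcont : Continuous g := continuous_const.max
    (continuous_const.min (((contD C).sub continuous_const).div_const ε))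
  have hg0 : ∀ x, 0 ≤ g x := fun x => le_max_left _ _
  have hg1 : ∀ x, g x ≤ 1 := fun x => max_le zero_le_one (min_le_left _ _)
  have hgone : ∀ x, r ≤ d x → g x = 1 := by
    intro x hx
    have ht : (1:ℝ) ≤ (d x - (r - ε)) / ε := by
      rw [le_div_iff₀ hε]; linarith
    simp [hgdef, min_eq_left ht]
  have hgzero : ∀ x, d x < r - ε → g x = 0 := by
    intro x hx
    have ht : (d x - (r - ε)) / ε ≤ 0 :=
      div_nonpos_of_nonpos_of_nonneg (by linarith) hε.le
    simp only [hgdef]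
    rw [min_eq_right (le_trans ht zero_le_one), max_eq_left ht]
  set φ : S → ℝ := fun x => f x * g x with hφdef
  have hφcont : Continuous φ := hf.mul hgcont
  have hφ0 : ∀ x, 0 ≤ φ x := fun x => mul_nonneg (hf0 x) (hg0 x)
  have hφB : ∀ x, φ x ≤ B := fun x =>
    le_trans (mul_le_of_le_one_right (hf0 x) (hg1 x)) (hfB x)
  have hrε : 0 < r - ε := by linarith
  have hφvan : ∀ x, d x < r - ε → φ x = 0 := fun x hx => by simp [hφdef, hgzero x hx]
  have hφtend : Tendsto (fun n => ∫ x, φ x ∂(μs n)) atTop (𝓝 (∫ x, φ x ∂μ)) :=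
    hconv φ hφcont hφ0 ⟨B, hφB⟩ ⟨r - ε, hrε, hφvan⟩
  have hφabs : ∀ x, |φ x| ≤ B := fun x => abs_le.2 ⟨by nlinarith [hφ0 x], hφB x⟩
  have hψabs : ∀ x, |ψ x| ≤ B := fun x => abs_le.2 ⟨by nlinarith [hψ0 x], hψB x⟩
  -- Step 5: the collar set E
  set E : Set S := A (r - ε) \ A r with hE
  have hEmeas : MeasurableSet E := (measA C (r-ε)).diff (measA C r)
  have hEK : E ⊆ K := by
    rintro x ⟨hx1, hx2⟩
    have hx1' : r - ε ≤ d x := hx1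
    have hx2' : d x < r := not_le.1 hx2
    exact ⟨hx1', subset_closure hx2'⟩
  have hsub : A r ⊆ A (r - ε) := fun x hx =>
    show r - ε ≤ d x from le_trans (by linarith) (show r ≤ d x from hx)
  have ident : ∀ m : Measure S, (∀ s > (0:ℝ), m {x | s ≤ Metric.infDist x C} ≠ ⊤) →
      ∫ x in A r, f x ∂m = (∫ x, φ x ∂m) - ∫ x in E, φ x ∂m := by
    intro m hm
    have hint1 : IntegrableOn φ (A r) m := integrableOn_of_bdd (hm r hr) hφcont hφabs
    have hintE : IntegrableOn φ E m :=
      (integrableOn_of_bdd (hm (r-ε) hrε) hφcont hφabs).mono_set (hE ▸ diff_subset)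
    have e1 : ∫ x, φ x ∂m = ∫ x in A (r-ε), φ x ∂m :=
      (setIntegral_eq_integral_of_forall_compl_eq_zero fun x hx =>
        hφvan x (not_le.1 hx)).symm
    have e2 : ∫ x in A r ∪ E, φ x ∂m = (∫ x in A r, φ x ∂m) + ∫ x in E, φ x ∂m :=
      setIntegral_union (by rw [hE]; exact disjoint_sdiff_right) hEmeas hint1 hintE
    have e3 : A r ∪ E = A (r - ε) := by rw [hE]; exact union_diff_cancel hsub
    have e4 : ∫ x in A r, φ x ∂m = ∫ x in A r, f x ∂m :=
      setIntegral_congr_fun (measA C r) fun x hx => by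
        simp [hφdef, hgone x hx]
    rw [← e4, e1, ← e3, e2]; ring
  have Ebound : ∀ m : Measure S, (∀ s > (0:ℝ), m {x | s ≤ Metric.infDist x C} ≠ ⊤) →
      |∫ x in E, φ x ∂m| ≤ ∫ x, ψ x ∂m := by
    intro m hm
    have hintE : IntegrableOn φ E m :=
      (integrableOn_of_bdd (hm (r-ε) hrε) hφcont hφabs).mono_set (hE ▸ diff_subset)
    have hintψE : IntegrableOn ψ E m :=
      (integrableOn_of_bdd (hm (r-ε) hrε) hψcont hψabs).mono_set (hE ▸ diff_subset)
    have hψint : Integrable ψ m := by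
      have heq : ψ = (A (r/2)).indicator ψ := by
        funext x
        by_cases hx : x ∈ A (r/2)
        · rw [indicator_of_mem hx]
        · rw [indicator_of_notMem hx, hψvan x (not_le.1 hx)]
      rw [heq]
      exact (integrable_indicator_iff (measA C (r/2))).2
        (integrableOn_of_bdd (hm (r/2) (half_pos hr)) hψcont hψabs)
    have hle1 : ∫ x in E, φ x ∂m ≤ ∫ x in E, ψ x ∂m :=
      setIntegral_mono_on hintE hintψE hEmeas fun x hx => by
        have hK1 : h x = 1 := hU1 (hEK hx)
        calc φ x ≤ B := hφB x
        _ = ψ x := by simp [hψdef, hK1]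
    have hle2 : ∫ x in E, ψ x ∂m ≤ ∫ x, ψ x ∂m :=
      setIntegral_le_integral hψint (Eventually.of_forall hψ0)
    have hge : 0 ≤ ∫ x in E, φ x ∂m := setIntegral_nonneg hEmeas fun x _ => hφ0 x
    rw [abs_of_nonneg hge]; exact le_trans hle1 hle2
  -- Final assembly
  obtain ⟨N1, hN1⟩ := Metric.tendsto_atTop.1 hφtend δ' hδ'
  obtain ⟨N2, hN2⟩ := Metric.tendsto_atTop.1 hψtend δ' hδ'
  refine ⟨max N1 N2, fun n hn => ?_⟩
  have hn1 := hN1 n (le_trans (le_max_left _ _) hn)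
  have hn2 := hN2 n (le_trans (le_max_right _ _) hn)
  rw [Real.dist_eq] at hn1 hn2 ⊢
  have idμ := ident μ hmemμ.2
  have idn := ident (μs n) (hmem n).2
  have ebμ := Ebound μ hmemμ.2
  have ebn := Ebound (μs n) (hmem n).2
  have hψn_le : ∫ x, ψ x ∂(μs n) ≤ B * δ' + δ' := by
    have := (abs_lt.1 hn2).2
    linarith [hψμ_le]
  rw [idμ, idn]
  have habs : |((∫ x, φ x ∂(μs n)) - ∫ x in E, φ x ∂(μs n)) -
      ((∫ x, φ x ∂μ) - ∫ x in E, φ x ∂μ)| ≤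
      |(∫ x, φ x ∂(μs n)) - ∫ x, φ x ∂μ| + |∫ x in E, φ x ∂(μs n)| +
        |∫ x in E, φ x ∂μ| := by
    have harr : ((∫ x, φ x ∂(μs n)) - ∫ x in E, φ x ∂(μs n)) -
        ((∫ x, φ x ∂μ) - ∫ x in E, φ x ∂μ) =
        ((∫ x, φ x ∂(μs n)) - ∫ x, φ x ∂μ) +
        ((∫ x in E, φ x ∂μ) - ∫ x in E, φ x ∂(μs n)) := by ring
    calc |((∫ x, φ x ∂(μs n)) - ∫ x in E, φ x ∂(μs n)) -
        ((∫ x, φ x ∂μ) - ∫ x in E, φ x ∂μ)|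
        ≤ |(∫ x, φ x ∂(μs n)) - ∫ x, φ x ∂μ| +
          |(∫ x in E, φ x ∂μ) - ∫ x in E, φ x ∂(μs n)| := by
          rw [harr]; exact abs_add_le _ _
      _ ≤ |(∫ x, φ x ∂(μs n)) - ∫ x, φ x ∂μ| +
          (|∫ x in E, φ x ∂μ| + |∫ x in E, φ x ∂(μs n)|) := by
          gcongr; exact abs_sub _ _
      _ = _ := by ring
  have hδeq : δ' * (2 * B + 3) = δ := div_mul_cancel₀ δ h2B3.ne'
  have hebn : |∫ x in E, φ x ∂(μs n)| ≤ B * δ' + δ' := le_trans ebn hψn_le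
  have hebμ : |∫ x in E, φ x ∂μ| ≤ B * δ' := le_trans ebμ hψμ_le
  calc |((∫ x, φ x ∂(μs n)) - ∫ x in E, φ x ∂(μs n)) -
      ((∫ x, φ x ∂μ) - ∫ x in E, φ x ∂μ)| ≤ _ := habs
    _ < δ := by linarith

end Helpers

/-- Portmanteau (i) ⇔ (iii): `μ_n → μ` in `M(S∖C)` iff for every `r > 0`
such that `μ(∂(S∖C^r)) = 0`, the restrictions of `μ_n` to `S∖C^r`
converge weakly (as finite measures) to the restriction of `μ`. -/
theorem MO_portmanteau_restriction
    {S : Type*} [MetricSpace S] [CompleteSpace S] [SecondCountableTopology S]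
    [MeasurableSpace S] [BorelSpace S]
    (C : Set S) (hC : IsClosed C)
    (μs : ℕ → Measure S) (μ : Measure S)
    (hmem : ∀ n, MOMem C (μs n)) (hmemμ : MOMem C μ) :
    MOConv C μs μ ↔
    (∀ r > (0 : ℝ), μ (frontier {x | r ≤ Metric.infDist x C}) = 0 →
      ∀ f : S → ℝ, Continuous f → (∃ B, ∀ x, |f x| ≤ B) →
        Tendsto (fun n => ∫ x in {x | r ≤ Metric.infDist x C}, f x ∂(μs n))
          atTop (𝓝 (∫ x in {x | r ≤ Metric.infDist x C}, f x ∂μ))) := by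
  constructor
  · -- forward direction
    intro hconv r hr hfront f hf hBex
    obtain ⟨B, hB⟩ := hBex
    set B' : ℝ := max B 0 with hB'def
    have hB'0 : 0 ≤ B' := le_max_right _ _
    have hB' : ∀ x, |f x| ≤ B' := fun x => le_trans (hB x) (le_max_left _ _)
    have key1 := forward_key hconv hmem hmemμ hr hfront
      (f := fun x => f x + B') (hf.add continuous_const) (B := 2 * B')
      (by linarith)
      (fun x => by have := abs_le.1 (hB' x); linarith)
      (fun x => by have := abs_le.1 (hB' x); linarith)
    have key2 := forward_key hconv hmem hmemμ hr hfront
      (f := fun _ => B') continuous_const (B := B') hB'0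
      (fun _ => hB'0) (fun _ => le_refl _)
    have key := key1.sub key2
    have ident : ∀ m : Measure S, m {x | r ≤ Metric.infDist x C} ≠ ⊤ →
        (∫ x in {x | r ≤ Metric.infDist x C}, (f x + B') ∂m) -
          (∫ x in {x | r ≤ Metric.infDist x C}, (fun _ => B') x ∂m) =
        ∫ x in {x | r ≤ Metric.infDist x C}, f x ∂m := by
      intro m hm
      have hint1 : IntegrableOn f {x | r ≤ Metric.infDist x C} m :=
        integrableOn_of_bdd hm hf hB'
      have hint2 : IntegrableOn (fun _ => B') {x | r ≤ Metric.infDist x C} m :=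
        integrableOn_const hm
      rw [integral_add hint1 hint2]
      ring
    have funeq : (fun n => ∫ x in {x | r ≤ Metric.infDist x C}, f x ∂(μs n)) =
        fun n => (∫ x in {x | r ≤ Metric.infDist x C}, (f x + B') ∂(μs n)) -
            ∫ x in {x | r ≤ Metric.infDist x C}, (fun _ => B') x ∂(μs n) := by
      funext n; rw [ident (μs n) ((hmem n).2 r hr)]
    rw [funeq, ← ident μ (hmemμ.2 r hr)]
    exact key
  · -- backward direction
    intro hyp f hf hf0 hBex hvanex
    obtain ⟨B, hB⟩ := hBex
    obtain ⟨r₀, hr₀, hvan⟩ := hvanex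
    -- choose r' ∈ (r₀/2, r₀) whose level set is μ-null
    set ν : Measure S := μ.restrict {x | r₀/2 ≤ Metric.infDist x C} with hν
    haveI : IsFiniteMeasure ν :=
      ⟨by rw [hν, Measure.restrict_apply_univ];
          exact lt_top_iff_ne_top.2 (hmemμ.2 _ (half_pos hr₀))⟩
    have hcount : Set.Countable {t : ℝ | 0 < ν {x | Metric.infDist x C = t}} :=
      MeasureTheory.Measure.countable_meas_level_set_pos ((contD C).measurable)
    have aux := measure_diff_null (s := Ioo (r₀/2) r₀)
      (Set.Countable.measure_zero hcount volume)
    have len_pos : (0 : ENNReal) < ENNReal.ofReal (r₀ - r₀/2) := by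
      rw [ENNReal.ofReal_pos]; linarith
    rw [← Real.volume_Ioo, ← aux] at len_pos
    obtain ⟨r', hr'⟩ := nonempty_of_measure_ne_zero len_pos.ne'
    obtain ⟨hr'Ioo, hr'good⟩ := hr'
    have hr'pos : 0 < r' := lt_trans (half_pos hr₀) hr'Ioo.1
    have hνlev : ν {x | Metric.infDist x C = r'} = 0 :=
      le_antisymm (not_lt.1 hr'good) zero_le
    have hlevmeas : MeasurableSet {x : S | Metric.infDist x C = r'} :=
      (isClosed_eq (contD C) continuous_const).measurableSet
    have hlev : μ {x | Metric.infDist x C = r'} = 0 := by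
      have hsub : {x : S | Metric.infDist x C = r'} ⊆
          {x : S | r₀/2 ≤ Metric.infDist x C} := fun x hx => by
        have hx' : Metric.infDist x C = r' := hx
        show r₀/2 ≤ Metric.infDist x C
        rw [hx']; exact hr'Ioo.1.le
      rwa [hν, Measure.restrict_apply hlevmeas,
        inter_eq_self_of_subset_left hsub] at hνlev
    have hfrontμ : μ (frontier {x : S | r' ≤ Metric.infDist x C}) = 0 :=
      measure_mono_null (frontierA_subset C r') hlev
    have habs : ∀ x, |f x| ≤ B := fun x => by
      rw [abs_of_nonneg (hf0 x)]; exact hB x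
    have hmain := hyp r' hr'pos hfrontμ f hf ⟨B, habs⟩
    have hvan' : ∀ x, x ∉ {x : S | r' ≤ Metric.infDist x C} → f x = 0 := fun x hx =>
      hvan x (lt_trans (not_le.1 hx) hr'Ioo.2)
    simpa only [setIntegral_eq_integral_of_forall_compl_eq_zero hvan'] using hmain
end
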